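/- Suppose the pair (λ,β) is T-log-symplectic and let S ⊆ S(λ,β). Say S satisfies (W1) if no element w of S_{≥2} has all entries ≥ −1 and |J_w| ≤ 1, and say S satisfies (W2) if there exists an integer M such that for all m ≥ M no element w of S_m has all entries ≥ −1 and |J_w| ≤ 2. Then: if S satisfies (W1), then S satisfies (W2); and if S satisfies (W2), then S is linearly independent over ℂ. -/

import Mathlib

open Finset Matrix

noncomputable section

/-- The standard embedding of an integer vector into `ℂⁿ`. -/
def cvec {n : ℕ} (w : Fin n → ℤ) : Fin n → ℂ := fun j => (w j : ℂ)

/-- `J_w = { j : w_j = -1 }`. -/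
def Jset {n : ℕ} (w : Fin n → ℤ) : Finset (Fin n) :=
  Finset.univ.filter (fun j => w j = -1)

/-- The linear map `β : ℂⁿ → V`, `w ↦ ∑ w_j β_j`. -/
def bmap {n : ℕ} {V : Type*} [AddCommGroup V] [Module ℂ V]
    (β : Fin n → V) (w : Fin n → ℂ) : V :=
  ∑ j, w j • β j

/-- The pair `(λ, β)` is T-log-symplectic. -/
def TLogSymp {n : ℕ} {V : Type*} [AddCommGroup V] [Module ℂ V]
    (M : Matrix (Fin n) (Fin n) ℂ) (β : Fin n → V) : Prop :=
  ∀ w : Fin n → ℂ, M.mulVec w = 0 → bmap β w = 0 → w = 0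

/-- The set `W(λ, β)`. -/
def Wset {n : ℕ} {V : Type*} [AddCommGroup V] [Module ℂ V]
    (M : Matrix (Fin n) (Fin n) ℂ) (β : Fin n → V) : Set (Fin n → ℤ) :=
  {w | (∀ j, -1 ≤ w j) ∧ (∀ j, j ∉ Jset w → M.mulVec (cvec w) j = 0) ∧
    bmap β (cvec w) = 0}

/-- The set `S(λ, β)` of smoothable weights. -/
def Sset {n : ℕ} {V : Type*} [AddCommGroup V] [Module ℂ V]
    (M : Matrix (Fin n) (Fin n) ℂ) (β : Fin n → V) : Set (Fin n → ℤ) :=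
  {θ | θ ∈ Wset M β ∧ (Jset θ).card = 2}

/-- `S_m`: sums of exactly `m` elements of `S`, repetitions allowed. -/
def SumOf {n : ℕ} (S : Set (Fin n → ℤ)) (m : ℕ) : Set (Fin n → ℤ) :=
  {w | ∃ l : Multiset (Fin n → ℤ), (∀ x ∈ l, x ∈ S) ∧ Multiset.card l = m ∧ l.sum = w}

/-- `S_{≥ m}`: sums of at least `m` elements of `S`, repetitions allowed. -/
def SumGE {n : ℕ} (S : Set (Fin n → ℤ)) (m : ℕ) : Set (Fin n → ℤ) :=
  {w | ∃ m', m ≤ m' ∧ w ∈ SumOf S m'}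

/-- A vector `w ∈ ℤⁿ` is negatively bordered. -/
def NegBordered {n : ℕ} (w : Fin n → ℤ) : Prop :=
  ∃ j k : Fin n, j < k ∧ w j = -1 ∧ w k = -1 ∧ (∀ i, i < j → w i = 0) ∧
    (∀ i, k < i → w i = 0) ∧ (∀ i, j < i → i < k → 0 ≤ w i)

/-!
For a smoothable weight `θ` with `J_θ = {v, p}`, skew-symmetry gives `θᵀλθ = 0`, which forces
`λθ = (λθ)_v (e_v - e_p)`, and `(λθ)_v ≠ 0` by T-log-symplecticity; in particular `θ` is
determined by `J_θ`, so `S` is finite. Pairing two weights through a common vertex shows that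
their values of `λ(·)_v` differ by a negative rational factor. Hence at most two weights pass
through a vertex, and in an integer relation `∑ h_θ θ = 0` two weights sharing a vertex have
coefficients of the same sign. The part of the relation with positive coefficients is then killed
by `λ` and `β`, so it vanishes: `0 ∈ S_m` for some `m > 0`, and its multiples contradict (W2).

For (W1) ⇒ (W2), Dickson's lemma applied to infinitely many sums with entries `≥ -1` yields two
of them, `w ≤ w'`, whose multisets of summands are nested; twice the difference is a
nonnegative element of `S_{≥2}`.
-/

theorem dotProduct_mulVec_add_dotProduct_mulVec_of_transpose_eq_neg {ι R : Type*} [Fintype ι]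
    [CommRing R] {A : Matrix ι ι R} (hA : Aᵀ = -A) (u v : ι → R) :
    u ⬝ᵥ (A *ᵥ v) + v ⬝ᵥ (A *ᵥ u) = 0 := by
  rw [dotProduct_mulVec v, ← mulVec_transpose, hA, neg_mulVec, dotProduct_comm, neg_dotProduct,
    dotProduct_comm, add_neg_cancel]

section SumOf

variable {n : ℕ} {S : Set (Fin n → ℤ)}

theorem nsmul_mem_SumOf {w : Fin n → ℤ} {m : ℕ} (hw : w ∈ SumOf S m) (k : ℕ) :
    k • w ∈ SumOf S (k * m) := by
  obtain ⟨l, hlS, rfl, rfl⟩ := hw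
  exact ⟨k • l, fun x hx => hlS x (Multiset.mem_nsmul.1 hx).2, Multiset.card_nsmul l k,
    Multiset.sum_nsmul l k⟩

theorem mem_SumOf_iff [Fintype S] {w : Fin n → ℤ} {m : ℕ} :
    w ∈ SumOf S m ↔ ∃ c : S → ℕ, ∑ t, c t = m ∧ ∑ t, c t • (t : Fin n → ℤ) = w := by
  classical
  constructor
  · rintro ⟨l, hlS, rfl, rfl⟩
    have hsub : ∀ x, x ∈ S.toFinset ↔ x ∈ S := fun _ => Set.mem_toFinset
    refine ⟨fun t => l.count (t : Fin n → ℤ), ?_, ?_⟩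
    · rw [← Finset.sum_subtype S.toFinset hsub (fun x => l.count x)]
      exact Multiset.sum_count_eq_card fun x hx => Set.mem_toFinset.2 (hlS x hx)
    · rw [← Finset.sum_subtype S.toFinset hsub (fun x => l.count x • x)]
      exact (Finset.sum_multiset_count_of_subset l _
        fun x hx => Set.mem_toFinset.2 (hlS x (Multiset.mem_toFinset.1 hx))).symm
  · rintro ⟨c, rfl, rfl⟩
    refine ⟨∑ t, Multiset.replicate (c t) (t : Fin n → ℤ), fun x hx => ?_, ?_, ?_⟩
    · obtain ⟨t, -, hxt⟩ := Multiset.mem_sum.1 hx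
      exact Multiset.eq_of_mem_replicate hxt ▸ t.2
    · simp [Multiset.card_sum]
    · simp [Multiset.sum_sum]

/-- Dickson's lemma applied to the pairs (multiplicities, shifted sum) of the infinitely
many admissible combinations gives two of them, `c ≤ c'` with `∑ c ≤ ∑ c'` coordinatewise;
their difference is the required combination. -/
theorem exists_ne_zero_sum_nsmul_nonneg [Fintype S]
    (hS : ∀ M₀, ∃ m, M₀ ≤ m ∧ ∃ w ∈ SumOf S m, ∀ j, -1 ≤ w j) :
    ∃ c : S → ℕ, c ≠ 0 ∧ ∀ j, 0 ≤ (∑ t, c t • (t : Fin n → ℤ)) j := by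
  set σ : (S → ℕ) → Fin n → ℤ := fun c => ∑ t, c t • (t : Fin n → ℤ)
  set P : Set (S → ℕ) := {c | ∀ j, -1 ≤ σ c j}
  have hP : P.Infinite := by
    refine Set.Infinite.of_image (fun c => ∑ t, c t) (Set.infinite_of_forall_exists_gt fun a => ?_)
    obtain ⟨m, hm, w, hw, hw1⟩ := hS (a + 1)
    obtain ⟨c, rfl, rfl⟩ := mem_SumOf_iff.1 hw
    exact ⟨_, ⟨c, hw1, rfl⟩, hm⟩
  set e := hP.natEmbedding
  obtain ⟨i, k, hik, hle⟩ := wellQuasiOrdered_le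
    (fun i => ((e i : S → ℕ), fun j => (σ (e i) j + 1).toNat))
  have hc : (e i : S → ℕ) ≤ e k := hle.1
  have hσ : ∀ j, σ (e i) j ≤ σ (e k) j := fun j => by
    have := hle.2 j
    have := (e i).2 j
    have := (e k).2 j
    simp only at *
    omega
  refine ⟨e k - e i, fun h0 => ?_, fun j => ?_⟩
  · exact hik.ne (e.injective (Subtype.ext (le_antisymm hc (tsub_eq_zero_iff_le.1 h0))))
  · have hdiff : σ (e k - e i) = σ (e k) - σ (e i) := by
      simp only [σ, Pi.sub_apply, ← Finset.sum_sub_distrib]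
      exact Finset.sum_congr rfl fun t _ => by rw [sub_nsmul _ (hc t), sub_eq_add_neg]
    have := hσ j
    simp only [σ] at hdiff this ⊢
    rw [hdiff, Pi.sub_apply]
    omega

end SumOf

section SmoothableWeights

variable {n : ℕ} {V : Type*} [AddCommGroup V] [Module ℂ V] {M : Matrix (Fin n) (Fin n) ℂ}
  {β : Fin n → V}

theorem mem_Jset {w : Fin n → ℤ} {j : Fin n} : j ∈ Jset w ↔ w j = -1 := by
  simp [Jset]

theorem Jset_eq_empty_of_nonneg {w : Fin n → ℤ} (hw : ∀ j, 0 ≤ w j) : Jset w = ∅ :=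
  Finset.eq_empty_of_forall_notMem fun j hj => by have := hw j; rw [mem_Jset.1 hj] at this; omega

theorem cvec_injective : Function.Injective (cvec (n := n)) :=
  fun _ _ h => funext fun j => Int.cast_injective (congrFun h j)

@[simp]
theorem cvec_zero : cvec (0 : Fin n → ℤ) = 0 :=
  funext fun _ => Int.cast_zero

theorem cvec_sum_zsmul {ι : Type*} (s : Finset ι) (c : ι → ℤ) (f : ι → Fin n → ℤ) :
    cvec (∑ i ∈ s, c i • f i) = ∑ i ∈ s, c i • cvec (f i) := by
  ext j
  simp [cvec, Finset.sum_apply]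

theorem linearIndependent_cvec_iff {ι : Type*} (f : ι → Fin n → ℤ) :
    LinearIndependent ℂ (fun i => cvec (f i)) ↔ LinearIndependent ℤ f := by
  rw [← linearIndependent_algebraMap_comp_iff (R := ℤ) (S := ℂ)]
  rfl

theorem bmap_eq_linearCombination : bmap β = Fintype.linearCombination ℂ β :=
  funext fun w => (Fintype.linearCombination_apply ℂ β w).symm

theorem TLogSymp.eq_zero_of_cvec (hTLS : TLogSymp M β) {w : Fin n → ℤ}
    (hM : M *ᵥ cvec w = 0) (hβ : bmap β (cvec w) = 0) : w = 0 :=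
  cvec_injective <| (hTLS _ hM hβ).trans cvec_zero.symm

theorem exists_Jset_eq_pair {θ : Fin n → ℤ} (hθ : (Jset θ).card = 2) {v : Fin n}
    (hv : v ∈ Jset θ) : ∃ p, v ≠ p ∧ Jset θ = {v, p} := by
  obtain ⟨x, y, hxy, hJ⟩ := Finset.card_eq_two.1 hθ
  rw [hJ, Finset.mem_insert, Finset.mem_singleton] at hv
  rcases hv with rfl | rfl
  · exact ⟨y, hxy, hJ⟩
  · exact ⟨x, hxy.symm, hJ.trans (Finset.pair_comm _ _)⟩

/-- `θᵀλθ = 0` forces `(λθ)_p = -(λθ)_v`. -/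
theorem mulVec_cvec_eq_smul_single_sub_single (hskew : Mᵀ = -M) {θ : Fin n → ℤ}
    (hθ : θ ∈ Sset M β) {v p : Fin n} (hvp : v ≠ p) (hJ : Jset θ = {v, p}) :
    M *ᵥ cvec θ = (M *ᵥ cvec θ) v • (Pi.single v 1 - Pi.single p 1) := by
  set z := M *ᵥ cvec θ
  have hout : ∀ j, j ≠ v ∧ j ≠ p → z j = 0 := fun j hj =>
    hθ.1.2.1 j (by simpa [hJ] using hj)
  have hθv : cvec θ v = -1 := by simp [cvec, mem_Jset.1 (hJ ▸ Finset.mem_insert_self v {p})]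
  have hθp : cvec θ p = -1 := by simp [cvec, mem_Jset.1 (show p ∈ Jset θ by simp [hJ])]
  have hself : cvec θ ⬝ᵥ z = 0 := by
    have := dotProduct_mulVec_add_dotProduct_mulVec_of_transpose_eq_neg hskew (cvec θ) (cvec θ)
    linear_combination this / 2
  rw [dotProduct, Fintype.sum_eq_add v p hvp (fun j hj => by rw [hout j hj, mul_zero]),
    hθv, hθp] at hself
  ext j
  by_cases hjv : j = v
  · subst hjv; simp [hvp]
  by_cases hjp : j = p
  · subst hjp; simp [Ne.symm hvp]; linear_combination -hself
  · simp [hjv, hjp, hout j ⟨hjv, hjp⟩]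

theorem mulVec_cvec_apply_ne_zero (hskew : Mᵀ = -M) (hTLS : TLogSymp M β) {θ : Fin n → ℤ}
    (hθ : θ ∈ Sset M β) {v : Fin n} (hv : v ∈ Jset θ) : (M *ᵥ cvec θ) v ≠ 0 := by
  intro hz
  obtain ⟨p, hvp, hJ⟩ := exists_Jset_eq_pair hθ.2 hv
  have hθ0 := hTLS.eq_zero_of_cvec
    (by rw [mulVec_cvec_eq_smul_single_sub_single hskew hθ hvp hJ, hz, zero_smul]) hθ.1.2.2
  simp [hθ0, mem_Jset] at hv

theorem Jset_injOn (hskew : Mᵀ = -M) (hTLS : TLogSymp M β) : Set.InjOn Jset (Sset M β) := by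
  intro θ hθ θ' hθ' hJJ
  obtain ⟨v, p, hvp, hJ⟩ := Finset.card_eq_two.1 hθ.2
  have hv : v ∈ Jset θ := by simp [hJ]
  set a := (M *ᵥ cvec θ) v
  set b := (M *ᵥ cvec θ') v
  have hzθ := mulVec_cvec_eq_smul_single_sub_single hskew hθ hvp hJ
  have hzθ' := mulVec_cvec_eq_smul_single_sub_single hskew hθ' hvp (hJJ ▸ hJ)
  have hker : b • cvec θ - a • cvec θ' = 0 := by
    refine hTLS _ ?_ ?_
    · rw [mulVec_sub, mulVec_smul, mulVec_smul, hzθ, hzθ', smul_smul, smul_smul, mul_comm,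
        sub_self]
    · rw [bmap_eq_linearCombination, map_sub, map_smul, map_smul,
        ← bmap_eq_linearCombination, hθ.1.2.2, hθ'.1.2.2, smul_zero, smul_zero, sub_zero]
  have hab : a = b := by
    have := congrFun hker v
    simp [cvec, mem_Jset.1 hv, mem_Jset.1 (hJJ ▸ hv)] at this
    linear_combination this
  rw [sub_eq_zero, hab] at hker
  exact cvec_injective
    (smul_right_injective _ (hab ▸ mulVec_cvec_apply_ne_zero hskew hTLS hθ hv) hker)

theorem nonneg_of_notMem_Jset {w : Fin n → ℤ} (hw : w ∈ Wset M β) {j : Fin n}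
    (hj : j ∉ Jset w) : 0 ≤ w j := by
  have := hw.1 j
  have := mt mem_Jset.2 hj
  omega

theorem Sset_finite (hskew : Mᵀ = -M) (hTLS : TLogSymp M β) : (Sset M β).Finite :=
  Set.Finite.of_finite_image (Set.toFinite _) (Jset_injOn hskew hTLS)

/-- Pairing `θ'ᵀλθ + θᵀλθ' = 0` against the formula for `λθ`, `λθ'` gives
`(1 + θ'_p) (λθ)_v + (1 + θ_{p'}) (λθ')_v = 0`, where both coefficients are positive. -/
theorem exists_neg_rat_mulVec_cvec_apply_eq (hskew : Mᵀ = -M) (hTLS : TLogSymp M β)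
    {θ θ' : Fin n → ℤ} (hθ : θ ∈ Sset M β) (hθ' : θ' ∈ Sset M β) (hne : θ ≠ θ') {v : Fin n}
    (hv : v ∈ Jset θ) (hv' : v ∈ Jset θ') :
    ∃ q : ℚ, q < 0 ∧ (M *ᵥ cvec θ') v = q * (M *ᵥ cvec θ) v := by
  obtain ⟨p, hvp, hJ⟩ := exists_Jset_eq_pair hθ.2 hv
  obtain ⟨p', hvp', hJ'⟩ := exists_Jset_eq_pair hθ'.2 hv'
  have hpp' : p ≠ p' := by
    rintro rfl
    exact hne (Jset_injOn hskew hTLS hθ hθ' (hJ.trans hJ'.symm))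
  have hp : (0 : ℚ) ≤ θ' p := by
    exact_mod_cast nonneg_of_notMem_Jset hθ'.1 (by simp [hJ', hvp.symm, hpp'])
  have hp' : (0 : ℚ) ≤ θ p' := by
    exact_mod_cast nonneg_of_notMem_Jset hθ.1 (by simp [hJ, hvp'.symm, hpp'.symm])
  have hpair := dotProduct_mulVec_add_dotProduct_mulVec_of_transpose_eq_neg hskew
    (cvec θ') (cvec θ)
  rw [mulVec_cvec_eq_smul_single_sub_single hskew hθ hvp hJ,
    mulVec_cvec_eq_smul_single_sub_single hskew hθ' hvp' hJ'] at hpair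
  simp only [dotProduct_smul, dotProduct_sub, dotProduct_single, smul_eq_mul, mul_one, cvec,
    mem_Jset.1 hv, mem_Jset.1 hv'] at hpair
  refine ⟨-(1 + θ' p) / (1 + θ p'), div_neg_of_neg_of_pos (by linarith) (by linarith), ?_⟩
  have : ((1 + θ p' : ℚ) : ℂ) ≠ 0 := by exact_mod_cast (show 1 + (θ p' : ℚ) ≠ 0 by linarith)
  push_cast at this ⊢
  field_simp
  linear_combination -hpair

/-- For three weights through `v`, the ratio `q₁₃ = q₂₃ q₁₂` of the values `(λθᵢ)_v` would be
both negative and positive. -/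
theorem eq_or_eq_of_mem_Jset (hskew : Mᵀ = -M) (hTLS : TLogSymp M β)
    {θ₁ θ₂ θ₃ : Fin n → ℤ} (h₁ : θ₁ ∈ Sset M β) (h₂ : θ₂ ∈ Sset M β) (h₃ : θ₃ ∈ Sset M β)
    (h₁₂ : θ₁ ≠ θ₂) {v : Fin n} (hv₁ : v ∈ Jset θ₁) (hv₂ : v ∈ Jset θ₂) (hv₃ : v ∈ Jset θ₃) :
    θ₃ = θ₁ ∨ θ₃ = θ₂ := by
  by_contra! h
  obtain ⟨q₁₂, hq₁₂, e₁₂⟩ := exists_neg_rat_mulVec_cvec_apply_eq hskew hTLS h₁ h₂ h₁₂ hv₁ hv₂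
  obtain ⟨q₁₃, hq₁₃, e₁₃⟩ :=
    exists_neg_rat_mulVec_cvec_apply_eq hskew hTLS h₁ h₃ (Ne.symm h.1) hv₁ hv₃
  obtain ⟨q₂₃, hq₂₃, e₂₃⟩ :=
    exists_neg_rat_mulVec_cvec_apply_eq hskew hTLS h₂ h₃ (Ne.symm h.2) hv₂ hv₃
  have hq : ((q₁₃ : ℚ) : ℂ) = q₂₃ * q₁₂ :=
    mul_right_cancel₀ (mulVec_cvec_apply_ne_zero hskew hTLS h₁ hv₁)
      (by rw [← e₁₃, e₂₃, e₁₂, mul_assoc])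
  norm_cast at hq
  nlinarith [mul_pos_of_neg_of_neg hq₂₃ hq₁₂]

end SmoothableWeights

section Relations

variable {n : ℕ} {V : Type*} [AddCommGroup V] [Module ℂ V] {M : Matrix (Fin n) (Fin n) ℂ}
  {β : Fin n → V} {S : Set (Fin n → ℤ)} [Fintype S]

theorem mulVec_cvec_sum_zsmul {ι : Type*} (s : Finset ι) (c : ι → ℤ) (f : ι → Fin n → ℤ) :
    M *ᵥ cvec (∑ i ∈ s, c i • f i) = ∑ i ∈ s, c i • M *ᵥ cvec (f i) := by
  simp only [cvec_sum_zsmul, mulVec_sum, mulVec_smul]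

theorem bmap_cvec_sum_zsmul_eq_zero {ι : Type*} {s : Finset ι} (c : ι → ℤ) {f : ι → Fin n → ℤ}
    (hf : ∀ i ∈ s, bmap β (cvec (f i)) = 0) : bmap β (cvec (∑ i ∈ s, c i • f i)) = 0 := by
  rw [cvec_sum_zsmul, bmap_eq_linearCombination, map_sum]
  refine Finset.sum_eq_zero fun i hi => ?_
  rw [map_zsmul, ← bmap_eq_linearCombination, hf i hi, smul_zero]

theorem sum_zsmul_mulVec_cvec_apply_eq_zero {h : S → ℤ} (hrel : ∑ t, h t • (t : Fin n → ℤ) = 0)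
    (v : Fin n) : ∑ t, h t • (M *ᵥ cvec t) v = 0 := by
  have hsum := congrFun (mulVec_cvec_sum_zsmul (M := M) Finset.univ h (↑)) v
  rw [hrel] at hsum
  simpa using hsum.symm

theorem zsmul_add_zsmul_eq_zero_of_mem_Jset (hskew : Mᵀ = -M) (hTLS : TLogSymp M β)
    (hS : S ⊆ Sset M β) {h : S → ℤ} (hrel : ∑ t, h t • (t : Fin n → ℤ) = 0) {t t' : S}
    (hne : t ≠ t') {v : Fin n} (hv : v ∈ Jset (t : Fin n → ℤ)) (hv' : v ∈ Jset (t' : Fin n → ℤ)) :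
    h t • (M *ᵥ cvec t) v + h t' • (M *ᵥ cvec t') v = 0 := by
  rw [← Fintype.sum_eq_add (f := fun u : S => h u • (M *ᵥ cvec (u : Fin n → ℤ)) v) t t' hne,
    sum_zsmul_mulVec_cvec_apply_eq_zero hrel]
  rintro u ⟨hut, hut'⟩
  by_cases hvu : v ∈ Jset (u : Fin n → ℤ)
  · rcases eq_or_eq_of_mem_Jset hskew hTLS (hS t.2) (hS t'.2) (hS u.2)
      (Subtype.coe_ne_coe.2 hne) hv hv' hvu with h | h
    · exact absurd (Subtype.ext h) hut
    · exact absurd (Subtype.ext h) hut'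
  · simp [(hS u.2).1.2.1 v hvu]

theorem pos_of_pos_of_mem_Jset (hskew : Mᵀ = -M) (hTLS : TLogSymp M β)
    (hS : S ⊆ Sset M β) {h : S → ℤ} (hrel : ∑ t, h t • (t : Fin n → ℤ) = 0) {t t' : S}
    {v : Fin n} (hv : v ∈ Jset (t : Fin n → ℤ)) (hv' : v ∈ Jset (t' : Fin n → ℤ))
    (ht : 0 < h t) : 0 < h t' := by
  obtain rfl | hne := eq_or_ne t t'
  · exact ht
  obtain ⟨q, hq, e⟩ := exists_neg_rat_mulVec_cvec_apply_eq hskew hTLS (hS t.2) (hS t'.2)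
    (Subtype.coe_ne_coe.2 hne) hv hv'
  have hbal := zsmul_add_zsmul_eq_zero_of_mem_Jset hskew hTLS hS hrel hne hv hv'
  rw [e, zsmul_eq_mul, zsmul_eq_mul] at hbal
  have hfactor : ((h t : ℂ) + q * h t') * (M *ᵥ cvec t) v = 0 := by linear_combination hbal
  have hcoef : (h t : ℚ) + q * h t' = 0 := by
    exact_mod_cast (mul_eq_zero.1 hfactor).resolve_right
      (mulVec_cvec_apply_ne_zero hskew hTLS (hS t.2) hv)
  have : (0 : ℚ) < h t := by exact_mod_cast ht
  by_contra! hle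
  have : (h t' : ℚ) ≤ 0 := by exact_mod_cast hle
  nlinarith

theorem sum_zsmul_eq_zero_of_closed (hTLS : TLogSymp M β) (hS : S ⊆ Sset M β) {h : S → ℤ}
    (hrel : ∑ t, h t • (t : Fin n → ℤ) = 0) (U : Finset S)
    (hU : ∀ t ∈ U, ∀ t' : S, ∀ v ∈ Jset (t : Fin n → ℤ), v ∈ Jset (t' : Fin n → ℤ) → t' ∈ U) :
    ∑ t ∈ U, h t • (t : Fin n → ℤ) = 0 := by
  refine hTLS.eq_zero_of_cvec ?_ (bmap_cvec_sum_zsmul_eq_zero h fun t _ => (hS t.2).1.2.2)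
  have hzero : ∀ u : S, ∀ v, v ∉ Jset (u : Fin n → ℤ) → (M *ᵥ cvec u) v = 0 :=
    fun u v hv => (hS u.2).1.2.1 v hv
  ext v
  rw [mulVec_cvec_sum_zsmul, Finset.sum_apply, Pi.zero_apply]
  by_cases hUv : ∃ t ∈ U, v ∈ Jset (t : Fin n → ℤ)
  · obtain ⟨t, htU, hvt⟩ := hUv
    rw [Finset.sum_subset (Finset.subset_univ U)]
    · simpa using sum_zsmul_mulVec_cvec_apply_eq_zero hrel v
    intro u _ hu
    rw [Pi.smul_apply, hzero u v fun hvu => hu (hU t htU u v hvt hvu), smul_zero]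
  · push Not at hUv
    exact Finset.sum_eq_zero fun t ht => by rw [Pi.smul_apply, hzero t v (hUv t ht), smul_zero]

/-- The weights with positive coefficient form a set closed under sharing a vertex. -/
theorem sum_toNat_smul_eq_zero (hskew : Mᵀ = -M) (hTLS : TLogSymp M β) (hS : S ⊆ Sset M β)
    {h : S → ℤ} (hrel : ∑ t, h t • (t : Fin n → ℤ) = 0) :
    ∑ t, (h t).toNat • (t : Fin n → ℤ) = 0 := by
  have hpos := sum_zsmul_eq_zero_of_closed hTLS hS hrel {t | 0 < h t} fun t ht t' v hv hv' => by
    simpa using pos_of_pos_of_mem_Jset hskew hTLS hS hrel hv hv' (by simpa using ht)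
  rw [Finset.sum_filter] at hpos
  rw [← hpos]
  refine Finset.sum_congr rfl fun t _ => ?_
  split_ifs with ht
  · rw [← natCast_zsmul, Int.toNat_of_nonneg ht.le]
  · rw [Int.toNat_eq_zero.2 (not_lt.1 ht), zero_smul]

theorem linearIndependent_of_forall_zero_notMem_SumOf (hskew : Mᵀ = -M) (hTLS : TLogSymp M β)
    (hS : S ⊆ Sset M β) (h0 : ∀ m, 0 < m → (0 : Fin n → ℤ) ∉ SumOf S m) :
    LinearIndependent ℤ (fun t : S => (t : Fin n → ℤ)) := by
  have hnonpos : ∀ h : S → ℤ, ∑ t, h t • (t : Fin n → ℤ) = 0 → ∀ t, h t ≤ 0 := by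
    intro h hrel t
    have hmem := mem_SumOf_iff.2
      ⟨fun t => (h t).toNat, rfl, sum_toNat_smul_eq_zero hskew hTLS hS hrel⟩
    have hsum : ∑ t, (h t).toNat = 0 := Nat.eq_zero_of_not_pos fun hpos => h0 _ hpos hmem
    exact Int.toNat_eq_zero.1 (Finset.sum_eq_zero_iff.1 hsum t (Finset.mem_univ t))
  refine Fintype.linearIndependent_iff.2 fun h hrel t => le_antisymm (hnonpos h hrel t) ?_
  have hrel' : ∑ t, (-h) t • (t : Fin n → ℤ) = 0 := by
    simp only [Pi.neg_apply, neg_smul, Finset.sum_neg_distrib, hrel, neg_zero]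
  simpa using hnonpos (-h) hrel' t

end Relations

theorem stmt6_general (n : ℕ) (M : Matrix (Fin n) (Fin n) ℂ) (hskew : Mᵀ = -M)
    {V : Type*} [AddCommGroup V] [Module ℂ V] (β : Fin n → V)
    (hTLS : TLogSymp M β) (S : Set (Fin n → ℤ)) (hS : S ⊆ Sset M β) :
    ((∀ w ∈ SumGE S 2, ¬((∀ j, -1 ≤ w j) ∧ (Jset w).card ≤ 1)) →
      ∃ M₀ : ℕ, ∀ m, M₀ ≤ m → ∀ w ∈ SumOf S m,
        ¬((∀ j, -1 ≤ w j) ∧ (Jset w).card ≤ 2)) ∧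
    ((∃ M₀ : ℕ, ∀ m, M₀ ≤ m → ∀ w ∈ SumOf S m,
        ¬((∀ j, -1 ≤ w j) ∧ (Jset w).card ≤ 2)) →
      LinearIndependent ℂ (fun θ : S => cvec (θ : Fin n → ℤ))) := by
  have := ((Sset_finite hskew hTLS).subset hS).fintype
  refine ⟨fun hW1 => ?_, fun ⟨M₀, hW2⟩ => ?_⟩
  · by_contra! hW2
    obtain ⟨c, hc, hnonneg⟩ := exists_ne_zero_sum_nsmul_nonneg fun M₀ => by
      obtain ⟨m, hm, w, hw, hw1, -⟩ := hW2 M₀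
      exact ⟨m, hm, w, hw, hw1⟩
    have hpos : 0 < ∑ t, c t := Nat.pos_of_ne_zero fun h0 =>
      hc (funext fun t => Finset.sum_eq_zero_iff.1 h0 t (Finset.mem_univ t))
    have hnonneg₂ : ∀ j, 0 ≤ (2 • ∑ t, c t • (t : Fin n → ℤ)) j := fun j => by
      simpa using hnonneg j
    refine hW1 _ ⟨_, by omega, nsmul_mem_SumOf (mem_SumOf_iff.2 ⟨c, rfl, rfl⟩) 2⟩
      ⟨fun j => (hnonneg₂ j).trans' (by norm_num), ?_⟩
    rw [Jset_eq_empty_of_nonneg hnonneg₂, Finset.card_empty]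
    exact zero_le_one
  · rw [linearIndependent_cvec_iff]
    refine linearIndependent_of_forall_zero_notMem_SumOf hskew hTLS hS fun m hm h0 => ?_
    have h0' := nsmul_mem_SumOf h0 (M₀ + 1)
    rw [smul_zero] at h0'
    exact hW2 _ (by nlinarith) 0 h0'
      ⟨fun _ => by norm_num, by rw [Jset_eq_empty_of_nonneg (w := 0) fun _ => le_rfl]; simp⟩

theorem stmt6 (n : ℕ) (hn : 0 < n) (M : Matrix (Fin n) (Fin n) ℂ) (hskew : Mᵀ = -M)
    {V : Type*} [AddCommGroup V] [Module ℂ V] (β : Fin n → V)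
    (hTLS : TLogSymp M β) (S : Set (Fin n → ℤ)) (hS : S ⊆ Sset M β) :
    ((∀ w ∈ SumGE S 2, ¬((∀ j, -1 ≤ w j) ∧ (Jset w).card ≤ 1)) →
      ∃ M₀ : ℕ, ∀ m, M₀ ≤ m → ∀ w ∈ SumOf S m,
        ¬((∀ j, -1 ≤ w j) ∧ (Jset w).card ≤ 2)) ∧
    ((∃ M₀ : ℕ, ∀ m, M₀ ≤ m → ∀ w ∈ SumOf S m,
        ¬((∀ j, -1 ≤ w j) ∧ (Jset w).card ≤ 2)) →
      LinearIndependent ℂ (fun θ : S => cvec (θ : Fin n → ℤ))) :=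
  stmt6_general n M hskew β hTLS S hS
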